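/- Let C ≥ 1 and fix o_n ∈ ℝ^C. Define h : ℝ^C → ℝ by h(o_m) = L_KL(o_m, o_n). Then for every o_m ∈ ℝ^C and every index i, ∂h/∂(o_m)_i = Σ_{j=1}^C w^{i,j} · (Δ(o_m)_{i,j} − Δ(o_n)_{i,j}), where w^{i,j} = softmax(o_m)_i · softmax(o_m)_j. -/

import Mathlib

/-! Since `log (softmax o j) = o j - log Z` with `Z = ∑ k, exp (o k)`, and the softmax weights
sum to `1`, the loss is `E / Z - log Z + log Z'` with `E = ∑ k, exp (om k) * (om k - oN k)` and
`Z'` the partition sum of `oN`. Only the `k = i` terms of `E` and `Z` move with `om i`, so the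
quotient rule gives `p i * (om i - oN i) - p i * ∑ j, p j * (om j - oN j)` for `p = softmax om`,
which is the claimed sum because `∑ j, p j = 1`. -/

open Real

noncomputable def softmax {C : ℕ} (o : Fin C → ℝ) (j : Fin C) : ℝ :=
  Real.exp (o j) / ∑ k, Real.exp (o k)

noncomputable def LKL {C : ℕ} (om oN : Fin C → ℝ) : ℝ :=
  ∑ j, softmax om j * Real.log (softmax om j / softmax oN j)

open Finset

theorem hasDerivAt_sum_comp_update {ι : Type*} [Fintype ι] [DecidableEq ι]
    {g : ι → ℝ → ℝ} {g' : ι → ℝ} (o : ι → ℝ) (i : ι)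
    (hg : ∀ k, HasDerivAt (g k) (g' k) (o k)) :
    HasDerivAt (fun t => ∑ k, g k (Function.update o i t k)) (g' i) (o i) := by
  have hu := hasDerivAt_pi.mp (hasDerivAt_update o i (o i))
  have hsum := HasDerivAt.fun_sum (u := univ) fun k _ =>
    (Function.update_eq_self i o ▸ hg k).comp (o i) (hu k)
  simpa [Pi.single_apply] using hsum

theorem sum_softmax_mul {C : ℕ} (o f : Fin C → ℝ) :
    ∑ j, softmax o j * f j = (∑ j, exp (o j) * f j) / ∑ k, exp (o k) := by
  simp only [softmax, sum_div, div_mul_eq_mul_div]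

section Nonempty

variable {C : ℕ} [Nonempty (Fin C)]

theorem sum_exp_pos (o : Fin C → ℝ) : 0 < ∑ k, exp (o k) :=
  sum_pos (fun _ _ => exp_pos _) univ_nonempty

theorem softmax_pos (o : Fin C → ℝ) (j : Fin C) : 0 < softmax o j :=
  div_pos (exp_pos _) (sum_exp_pos o)

theorem sum_softmax (o : Fin C → ℝ) : ∑ j, softmax o j = 1 := by
  simp only [softmax, ← sum_div, div_self (sum_exp_pos o).ne']

theorem sum_softmax_mul_sub (o f : Fin C → ℝ) (a : ℝ) :
    ∑ j, softmax o j * (a - f j) = a - ∑ j, softmax o j * f j := by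
  simp only [mul_sub, sum_sub_distrib, ← sum_mul, sum_softmax, one_mul]

theorem log_softmax (o : Fin C → ℝ) (j : Fin C) :
    log (softmax o j) = o j - log (∑ k, exp (o k)) := by
  rw [softmax, log_div (exp_ne_zero _) (sum_exp_pos o).ne', log_exp]

theorem LKL_eq_sum_exp (om oN : Fin C → ℝ) :
    LKL om oN = (∑ j, exp (om j) * (om j - oN j)) / (∑ k, exp (om k))
      - log (∑ k, exp (om k)) + log (∑ k, exp (oN k)) := by
  have hterm : ∀ j, softmax om j * log (softmax om j / softmax oN j)
      = softmax om j * (om j - oN j)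
        + (log (∑ k, exp (oN k)) - log (∑ k, exp (om k))) * softmax om j := fun j => by
    rw [log_div (softmax_pos om j).ne' (softmax_pos oN j).ne', log_softmax, log_softmax]
    ring
  rw [LKL, sum_congr rfl fun j _ => hterm j, sum_add_distrib, ← mul_sum, sum_softmax,
    sum_softmax_mul]
  ring

end Nonempty

theorem kl_partial_deriv_first_general (C : ℕ) (om oN : Fin C → ℝ) (i : Fin C) :
    HasDerivAt (fun t => LKL (Function.update om i t) oN)
      (∑ j, (softmax om i * softmax om j) * ((om i - om j) - (oN i - oN j))) (om i) := by
  have : Nonempty (Fin C) := ⟨i⟩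
  have hZ : HasDerivAt (fun t => ∑ k, exp (Function.update om i t k)) (exp (om i)) (om i) :=
    hasDerivAt_sum_comp_update om i fun k => hasDerivAt_exp (om k)
  have hE : HasDerivAt
      (fun t => ∑ k, exp (Function.update om i t k) * (Function.update om i t k - oN k))
      (exp (om i) * (om i - oN i) + exp (om i)) (om i) :=
    hasDerivAt_sum_comp_update om i fun k => by
      simpa using (hasDerivAt_exp (om k)).mul ((hasDerivAt_id (om k)).sub_const (oN k))
  have hZ0 : ∑ k, exp (Function.update om i (om i) k) ≠ 0 := (sum_exp_pos _).ne'
  have key := ((hE.div hZ hZ0).sub (hZ.log hZ0)).add_const (log (∑ k, exp (oN k)))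
  rw [Function.update_eq_self] at key
  refine (funext fun t => LKL_eq_sum_exp (Function.update om i t) oN) ▸ key.congr_deriv ?_
  have hweights : ∀ j, softmax om i * softmax om j * ((om i - om j) - (oN i - oN j))
      = softmax om i * (softmax om j * ((om i - oN i) - (om j - oN j))) := fun j => by ring
  rw [sum_congr rfl fun j _ => hweights j, ← mul_sum, sum_softmax_mul_sub, sum_softmax_mul,
    softmax]
  field_simp
  ring

/-- Partial derivative of `o_m ↦ L_KL(o_m, o_n)`:
`∂/∂(o_m)_i = ∑ j, w^{i,j} ((Δ o_m)_{i,j} - (Δ o_n)_{i,j})`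
with `w^{i,j} = softmax(o_m)_i * softmax(o_m)_j` and `Δ(o)_{j,k} = o_j - o_k`. -/
theorem kl_partial_deriv_first (C : ℕ) (hC : 1 ≤ C) (om oN : Fin C → ℝ) (i : Fin C) :
    HasDerivAt (fun t => LKL (Function.update om i t) oN)
      (∑ j, (softmax om i * softmax om j) * ((om i - om j) - (oN i - oN j))) (om i) :=
  kl_partial_deriv_first_general C om oN i
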